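/- Let t > 0, let (ν_s)_{s∈[0,t]} be a weakly continuous family of finite Borel measures on ℝ^d, and let n : [0,t] × ℝ^d → [0,∞) be bounded and continuous and such that for every s ∈ [0,t] and every Borel set A ⊆ ℝ^d one has ∫₀^s ν_r(A) dr = ∫_A n(s,x) dx. Then for every Borel measurable f : ℝ^d → [0,1], ∫₀^t ( ∫_{ℝ^d} f(x)² e^{−2 n(s,x)} ν_s(dx) ) ds = (1/2) ∫_{ℝ^d} f(x)² (1 − e^{−2 n(t,x)}) dx, and in particular this quantity is at most (1/2) times the Lebesgue measure of the support of f when that support is bounded. -/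

import Mathlib

open MeasureTheory ProbabilityTheory Filter Topology Set Function Real
open scoped ENNReal

/-!
Regard `ds ⊗ ν_s` as a measure on `[0, t] × ℝᵈ`. The density hypothesis says that its
restriction to `(a, b] × ℝᵈ` has `ℝᵈ`-marginal `(n(b, ·) - n(a, ·)) dx`; hence each `n(·, x)` is
nondecreasing (a.e. in `x` first, then everywhere by continuity), `n(0, ·) = 0`, and
`∫_a^b ∫ g dν_s ds = ∫ g (n(b, ·) - n(a, ·)) dx` for every `g ≥ 0`. Freezing the weight
`e^{-2 n(s, x)}` at the left, resp. right, endpoint of each cell of a uniform partition of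
`[0, t]` bounds the left-hand side above, resp. below, by `∫ f² S dx` where `S` is a
Riemann–Stieltjes sum for `∫₀ᵗ e^{-2 n(s, x)} d_s n(s, x) = (1 - e^{-2 n(t, x)}) / 2`. By uniform
continuity of `n(·, x)` both sums converge to this value, and dominated convergence (with
dominant `n(t, ·)`, integrable since the occupation measure is finite) gives the identity.
The support bound follows from `f² (1 - e^{-2n}) ≤ 𝟙_{supp f}`.
-/

-- `(exp (-2u) - exp (-2v)) / 2 = ∫ᵤᵛ exp (-2r) dr` lies between the right- and left-endpoint
-- rectangles; by convexity this holds for all `u`, `v`, in either order.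
theorem sub_mul_exp_neg_two_mul_le (u v : ℝ) :
    (v - u) * exp (-2 * v) ≤ (exp (-2 * u) - exp (-2 * v)) / 2 := by
  have hsplit : exp (-2 * u) = exp (-2 * v) * exp (2 * (v - u)) := by
    rw [← exp_add]; ring_nf
  nlinarith [add_one_le_exp (2 * (v - u)), exp_pos (-2 * v)]

theorem exp_neg_two_mul_sub_le (u v : ℝ) :
    (exp (-2 * u) - exp (-2 * v)) / 2 ≤ (v - u) * exp (-2 * u) := by
  have hsplit : exp (-2 * v) = exp (-2 * u) * exp (-2 * (v - u)) := by
    rw [← exp_add]; ring_nf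
  nlinarith [add_one_le_exp (-2 * (v - u)), exp_pos (-2 * u)]

noncomputable def gridPoint (t : ℝ) (N i : ℕ) : ℝ := i * t / N

section Grid

variable {t : ℝ} {N : ℕ}

@[simp] theorem gridPoint_zero : gridPoint t N 0 = 0 := by simp [gridPoint]

theorem gridPoint_self (hN : N ≠ 0) : gridPoint t N N = t := by
  simp [gridPoint, mul_div_cancel_left₀ t (Nat.cast_ne_zero.2 hN)]

theorem gridPoint_succ_sub (i : ℕ) : gridPoint t N (i + 1) - gridPoint t N i = t / N := by
  simp only [gridPoint]; push_cast; ring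

theorem gridPoint_mono (ht : 0 ≤ t) : Monotone (gridPoint t N) := fun i j hij ↦ by
  unfold gridPoint; gcongr

theorem gridPoint_mem_Icc (ht : 0 ≤ t) {i : ℕ} (hi : i ≤ N) : gridPoint t N i ∈ Icc 0 t := by
  rcases Nat.eq_zero_or_pos N with rfl | hN
  · simp [Nat.le_zero.1 hi, ht]
  · have h0 := gridPoint_mono (N := N) ht (Nat.zero_le i)
    have hN' := gridPoint_mono (N := N) ht hi
    rw [gridPoint_zero] at h0
    rw [gridPoint_self hN.ne'] at hN'
    exact ⟨h0, hN'⟩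

end Grid

/-- Left and right Riemann–Stieltjes sums, on the uniform grid of `[0, t]` with `N` cells, for
`∫₀ᵗ exp (-2φ) dφ = (exp (-2 φ 0) - exp (-2 φ t)) / 2`. -/
noncomputable def leftExpSum (φ : ℝ → ℝ) (t : ℝ) (N : ℕ) : ℝ :=
  ∑ i ∈ Finset.range N, (φ (gridPoint t N (i + 1)) - φ (gridPoint t N i)) *
    exp (-2 * φ (gridPoint t N i))

noncomputable def rightExpSum (φ : ℝ → ℝ) (t : ℝ) (N : ℕ) : ℝ :=
  ∑ i ∈ Finset.range N, (φ (gridPoint t N (i + 1)) - φ (gridPoint t N i)) *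
    exp (-2 * φ (gridPoint t N (i + 1)))

section ExpSums

variable {φ : ℝ → ℝ} {t : ℝ} {N : ℕ}

theorem MonotoneOn.gridPoint_le (hφ : MonotoneOn φ (Icc 0 t)) (ht : 0 ≤ t) {i : ℕ} (hi : i < N) :
    φ (gridPoint t N i) ≤ φ (gridPoint t N (i + 1)) :=
  hφ (gridPoint_mem_Icc ht hi.le) (gridPoint_mem_Icc ht hi) (gridPoint_mono ht i.le_succ)

theorem sum_exp_gridPoint_sub_div_two (hN : N ≠ 0) :
    ∑ i ∈ Finset.range N,
        (exp (-2 * φ (gridPoint t N i)) - exp (-2 * φ (gridPoint t N (i + 1)))) / 2 =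
      (exp (-2 * φ 0) - exp (-2 * φ t)) / 2 := by
  rw [← Finset.sum_div, Finset.sum_range_sub' (fun i ↦ exp (-2 * φ (gridPoint t N i))),
    gridPoint_zero, gridPoint_self hN]

theorem rightExpSum_le (hN : N ≠ 0) :
    rightExpSum φ t N ≤ (exp (-2 * φ 0) - exp (-2 * φ t)) / 2 := by
  rw [← sum_exp_gridPoint_sub_div_two hN]
  exact Finset.sum_le_sum fun _ _ ↦ sub_mul_exp_neg_two_mul_le _ _

theorem le_leftExpSum (hN : N ≠ 0) :
    (exp (-2 * φ 0) - exp (-2 * φ t)) / 2 ≤ leftExpSum φ t N := by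
  rw [← sum_exp_gridPoint_sub_div_two hN]
  exact Finset.sum_le_sum fun _ _ ↦ exp_neg_two_mul_sub_le _ _

theorem leftExpSum_sub_rightExpSum_le (hφ : MonotoneOn φ (Icc 0 t)) (ht : 0 ≤ t) (hN : N ≠ 0)
    {ε : ℝ} (hε : ∀ i < N, φ (gridPoint t N (i + 1)) - φ (gridPoint t N i) ≤ ε) :
    leftExpSum φ t N - rightExpSum φ t N ≤ ε * (exp (-2 * φ 0) - exp (-2 * φ t)) := by
  have htel := sum_exp_gridPoint_sub_div_two (φ := φ) (t := t) hN
  rw [← Finset.sum_div, div_left_inj' two_ne_zero] at htel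
  rw [leftExpSum, rightExpSum, ← Finset.sum_sub_distrib, ← htel, Finset.mul_sum]
  refine Finset.sum_le_sum fun i hi ↦ ?_
  have hmono := hφ.gridPoint_le ht (Finset.mem_range.1 hi)
  rw [← mul_sub]
  exact mul_le_mul_of_nonneg_right (hε i (Finset.mem_range.1 hi))
    (sub_nonneg.2 (exp_le_exp.2 (by linarith)))

theorem eventually_gridPoint_increment_le (hφ : ContinuousOn φ (Icc 0 t)) (ht : 0 ≤ t) {ε : ℝ}
    (hε : 0 < ε) :
    ∀ᶠ N : ℕ in atTop, ∀ i < N, φ (gridPoint t N (i + 1)) - φ (gridPoint t N i) ≤ ε := by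
  obtain ⟨δ, hδ, hφδ⟩ :=
    Metric.uniformContinuousOn_iff.1 (isCompact_Icc.uniformContinuousOn_of_continuous hφ) ε hε
  obtain ⟨N₀, hN₀⟩ := exists_nat_gt (t / δ)
  filter_upwards [eventually_gt_atTop N₀] with N hN i hi
  have hN₀pos : (0 : ℝ) < N₀ := (div_nonneg ht hδ.le).trans_lt hN₀
  have hmesh : t / N < δ := by
    calc t / N ≤ t / N₀ := div_le_div_of_nonneg_left ht hN₀pos (by exact_mod_cast hN.le)
      _ < δ := (div_lt_iff₀ hN₀pos).2 (by rwa [div_lt_iff₀ hδ, mul_comm] at hN₀)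
  have hdist := hφδ _ (gridPoint_mem_Icc ht hi) _ (gridPoint_mem_Icc ht hi.le)
    (by rw [Real.dist_eq, gridPoint_succ_sub, abs_of_nonneg (by positivity)]; exact hmesh)
  exact (le_abs_self _).trans (Real.dist_eq _ _ ▸ hdist).le

theorem tendsto_leftExpSum_sub_rightExpSum (hφ : MonotoneOn φ (Icc 0 t))
    (hφc : ContinuousOn φ (Icc 0 t)) (ht : 0 ≤ t) :
    Tendsto (fun N ↦ leftExpSum φ t N - rightExpSum φ t N) atTop (𝓝 0) := by
  set C := exp (-2 * φ 0) - exp (-2 * φ t)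
  have hC : 0 ≤ C := sub_nonneg.2 (exp_le_exp.2 (by
    linarith [hφ (left_mem_Icc.2 ht) (right_mem_Icc.2 ht) ht]))
  refine tendsto_order.2 ⟨fun a ha ↦ ?_, fun a ha ↦ ?_⟩
  · filter_upwards [eventually_ne_atTop 0] with N hN
    linarith [rightExpSum_le (φ := φ) (t := t) hN, le_leftExpSum (φ := φ) (t := t) hN]
  · filter_upwards [eventually_gridPoint_increment_le hφc ht (div_pos ha (by linarith : 0 < C + 1)),
      eventually_ne_atTop 0] with N hN hN0
    calc leftExpSum φ t N - rightExpSum φ t N ≤ a / (C + 1) * C :=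
          leftExpSum_sub_rightExpSum_le hφ ht hN0 hN
      _ < a := by rw [div_mul_eq_mul_div, div_lt_iff₀ (by linarith)]; nlinarith

theorem tendsto_rightExpSum (hφ : MonotoneOn φ (Icc 0 t)) (hφc : ContinuousOn φ (Icc 0 t))
    (ht : 0 ≤ t) :
    Tendsto (rightExpSum φ t) atTop (𝓝 ((exp (-2 * φ 0) - exp (-2 * φ t)) / 2)) := by
  have hdiff := tendsto_leftExpSum_sub_rightExpSum hφ hφc ht
  refine tendsto_of_tendsto_of_tendsto_of_le_of_le'
    (by simpa only [sub_zero] using tendsto_const_nhds.sub hdiff) tendsto_const_nhds ?_ ?_ <;>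
  filter_upwards [eventually_ne_atTop 0] with N hN
  · linarith [le_leftExpSum (φ := φ) (t := t) hN]
  · exact rightExpSum_le hN

theorem tendsto_leftExpSum (hφ : MonotoneOn φ (Icc 0 t)) (hφc : ContinuousOn φ (Icc 0 t))
    (ht : 0 ≤ t) :
    Tendsto (leftExpSum φ t) atTop (𝓝 ((exp (-2 * φ 0) - exp (-2 * φ t)) / 2)) := by
  have hdiff := tendsto_leftExpSum_sub_rightExpSum hφ hφc ht
  refine tendsto_of_tendsto_of_tendsto_of_le_of_le' tendsto_const_nhds
    (by simpa only [add_zero] using tendsto_const_nhds.add hdiff) ?_ ?_ <;>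
  filter_upwards [eventually_ne_atTop 0] with N hN
  · exact le_leftExpSum hN
  · linarith [rightExpSum_le (φ := φ) (t := t) hN]

theorem sum_gridPoint_increment_mul_le (hφ : MonotoneOn φ (Icc 0 t)) (hφ0 : 0 ≤ φ 0) (ht : 0 ≤ t)
    {c : ℕ → ℝ} (hc : ∀ i, c i ≤ 1) :
    ∑ i ∈ Finset.range N, (φ (gridPoint t N (i + 1)) - φ (gridPoint t N i)) * c i ≤ φ t := by
  calc _ ≤ ∑ i ∈ Finset.range N, (φ (gridPoint t N (i + 1)) - φ (gridPoint t N i)) :=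
        Finset.sum_le_sum fun i hi ↦ mul_le_of_le_one_right
          (sub_nonneg.2 (hφ.gridPoint_le ht (Finset.mem_range.1 hi))) (hc i)
    _ = φ (gridPoint t N N) - φ 0 := by
        rw [Finset.sum_range_sub (fun i ↦ φ (gridPoint t N i)), gridPoint_zero]
    _ ≤ φ t := by
        rcases eq_or_ne N 0 with rfl | hN
        · simpa using hφ0.trans (hφ (left_mem_Icc.2 ht) (right_mem_Icc.2 ht) ht)
        · rw [gridPoint_self hN]; linarith

end ExpSums

theorem Continuous.measurable_toMeasure {α X : Type*} [TopologicalSpace α] [MeasurableSpace α]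
    [OpensMeasurableSpace α] [TopologicalSpace X] [HasOuterApproxClosed X] [MeasurableSpace X]
    [BorelSpace X] {ν : α → FiniteMeasure X} (hν : Continuous ν) :
    Measurable fun a ↦ (ν a : Measure X) := by
  have h_closed : ∀ F : Set X, IsClosed F → Measurable fun a ↦ (ν a : Measure X) F := by
    intro F hF
    refine ENNReal.measurable_of_tendsto' atTop (fun k ↦ ?_)
      (tendsto_pi_nhds.2 fun a ↦ HasOuterApproxClosed.tendsto_lintegral_apprSeq hF (ν a))
    refine (continuous_iff_continuousAt.2 fun a ↦ ?_).measurable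
    exact FiniteMeasure.tendsto_iff_forall_lintegral_tendsto.1 (hν.tendsto a) _
  exact .measure_of_isPiSystem (BorelSpace.measurable_eq.trans borel_eq_generateFrom_isClosed)
    isPiSystem_isClosed h_closed (h_closed _ isClosed_univ)

theorem MeasureTheory.Measure.eq_withDensity_ofReal_of_measureReal_eq {X : Type*}
    [TopologicalSpace X] [MeasurableSpace X] [OpensMeasurableSpace X] [T2Space X]
    [SigmaCompactSpace X] {ρ μ : Measure X} [IsFiniteMeasure ρ] {g : X → ℝ}
    (hg : LocallyIntegrable g μ) (hg0 : 0 ≤ᵐ[μ] g)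
    (h : ∀ A, MeasurableSet A → ρ.real A = ∫ x in A, g x ∂μ) :
    ρ = μ.withDensity fun x ↦ ENNReal.ofReal (g x) := by
  refine (Measure.ext_iff_of_iUnion_eq_univ (iUnion_compactCovering X)).2 fun k ↦ ?_
  have hK := isCompact_compactCovering X k
  ext A hA
  have hAK := hA.inter hK.measurableSet
  rw [Measure.restrict_apply hA, Measure.restrict_apply hA, withDensity_apply _ hAK,
    ← ofReal_integral_eq_lintegral_ofReal ((hg.integrableOn_isCompact hK).mono_set
      inter_subset_right) (ae_restrict_of_ae hg0), ← h _ hAK, measureReal_def,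
    ENNReal.ofReal_toReal (measure_ne_top _ _)]

theorem MeasureTheory.Measure.le_of_ae_le {X Y : Type*} [TopologicalSpace X] [MeasurableSpace X]
    {μ : Measure X} [μ.IsOpenPosMeasure] [TopologicalSpace Y] [Preorder Y] [OrderClosedTopology Y]
    {f g : X → Y} (h : f ≤ᵐ[μ] g) (hf : Continuous f) (hg : Continuous g) : f ≤ g := by
  have hdense := (μ.dense_of_ae h).closure_eq
  rw [(isClosed_le hf hg).closure_eq] at hdense
  exact fun x ↦ (hdense ▸ mem_univ x : x ∈ {x | f x ≤ g x})

theorem setLIntegral_Ioc_eq_sum {μ : Measure ℝ} {p : ℕ → ℝ} (hp : Monotone p) (F : ℝ → ℝ≥0∞)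
    (N : ℕ) :
    ∫⁻ s in Ioc (p 0) (p N), F s ∂μ =
      ∑ i ∈ Finset.range N, ∫⁻ s in Ioc (p i) (p (i + 1)), F s ∂μ := by
  induction N with
  | zero => simp
  | succ N ih =>
    rw [Finset.sum_range_succ, ← ih, ← Ioc_union_Ioc_eq_Ioc (hp N.zero_le) (hp N.le_succ),
      lintegral_union measurableSet_Ioc (Ioc_disjoint_Ioc_of_le le_rfl)]

theorem tendsto_lintegral_ofReal_of_le {X : Type*} [MeasurableSpace X] {μ : Measure X}
    {F : ℕ → X → ℝ} {f B : X → ℝ} (hF : ∀ N, Measurable (F N)) (hFB : ∀ N x, F N x ≤ B x)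
    (hB : ∫⁻ x, ENNReal.ofReal (B x) ∂μ ≠ ∞)
    (hlim : ∀ᵐ x ∂μ, Tendsto (fun N ↦ F N x) atTop (𝓝 (f x))) :
    Tendsto (fun N ↦ ∫⁻ x, ENNReal.ofReal (F N x) ∂μ) atTop (𝓝 (∫⁻ x, ENNReal.ofReal (f x) ∂μ)) :=
  tendsto_lintegral_of_dominated_convergence _ (fun N ↦ (hF N).ennreal_ofReal)
    (fun N ↦ ae_of_all _ fun x ↦ ENNReal.ofReal_le_ofReal (hFB N x)) hB
    (hlim.mono fun _ hx ↦ (ENNReal.continuous_ofReal.tendsto _).comp hx)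

theorem integral_integral_eq_toReal_lintegral {α X : Type*} [MeasurableSpace α]
    [MeasurableSpace X] {ρ : Measure α} {κ : Kernel α X} [IsFiniteKernel κ] {F : α → X → ℝ}
    (hF : Measurable (uncurry F)) (hF0 : ∀ a x, 0 ≤ F a x) {C : ℝ} (hFC : ∀ a x, F a x ≤ C) :
    ∫ a, ∫ x, F a x ∂κ a ∂ρ = (∫⁻ a, ∫⁻ x, ENNReal.ofReal (F a x) ∂κ a ∂ρ).toReal := by
  rw [← integral_toReal hF.ennreal_ofReal.lintegral_kernel_prod_right.aemeasurable
    (ae_of_all _ fun a ↦ ?_)]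
  · exact integral_congr_ae (ae_of_all _ fun a ↦ integral_eq_lintegral_of_nonneg_ae
      (ae_of_all _ (hF0 a)) (hF.comp measurable_prodMk_left).aestronglyMeasurable)
  · calc ∫⁻ x, ENNReal.ofReal (F a x) ∂κ a ≤ ∫⁻ _, ENNReal.ofReal C ∂κ a :=
          lintegral_mono fun x ↦ ENNReal.ofReal_le_ofReal (hFC a x)
      _ < ∞ := by
          rw [lintegral_const]; exact ENNReal.mul_lt_top ENNReal.ofReal_lt_top (measure_lt_top _ _)

theorem integral_le_measureReal_of_support_subset {X : Type*} [MeasurableSpace X]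
    {μ : Measure X} {g : X → ℝ} {S : Set X} (hgm : AEStronglyMeasurable g μ)
    (hg0 : ∀ x, 0 ≤ g x) (hg1 : ∀ x, g x ≤ 1) (hgS : support g ⊆ S) (hS : μ S ≠ ∞) :
    ∫ x, g x ∂μ ≤ μ.real S := by
  rw [integral_eq_lintegral_of_nonneg_ae (ae_of_all _ hg0) hgm, measureReal_def]
  refine ENNReal.toReal_mono hS ?_
  rw [← setLIntegral_eq_of_support_subset fun x hx ↦ hgS fun h ↦ hx (by simp [h]),
    ← setLIntegral_one]
  exact lintegral_mono fun x ↦ ENNReal.ofReal_le_one.2 (hg1 x)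

namespace ProbabilityTheory.Kernel

variable {X : Type*} [TopologicalSpace X] [HasOuterApproxClosed X] [MeasurableSpace X]
  [BorelSpace X] {a b : ℝ}

noncomputable def IccExtend (hab : a ≤ b) (ν : ℝ → FiniteMeasure X)
    (hν : ContinuousOn ν (Icc a b)) : Kernel ℝ X where
  toFun s := ν (projIcc a b hab s)
  measurable' := (hν.comp_continuous continuous_projIcc.subtype_val
    fun s ↦ (projIcc a b hab s).2).measurable_toMeasure

theorem IccExtend_apply_of_mem {hab : a ≤ b} {ν : ℝ → FiniteMeasure X}
    {hν : ContinuousOn ν (Icc a b)} {s : ℝ} (hs : s ∈ Icc a b) :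
    IccExtend hab ν hν s = ν s := by
  simp [IccExtend, projIcc_of_mem hab hs]

instance (hab : a ≤ b) (ν : ℝ → FiniteMeasure X) (hν : ContinuousOn ν (Icc a b)) :
    IsFiniteKernel (IccExtend hab ν hν) := by
  obtain ⟨C, hC⟩ := (isCompact_Icc.image_of_continuousOn
    (FiniteMeasure.continuous_mass.comp_continuousOn hν)).bddAbove
  refine ⟨⟨C, ENNReal.coe_lt_top, fun s ↦ ?_⟩⟩
  rw [IccExtend, coe_mk, ← FiniteMeasure.ennreal_mass, ENNReal.coe_le_coe]
  exact hC (mem_image_of_mem _ (projIcc a b hab s).2)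

end ProbabilityTheory.Kernel

section Occupation

variable {X : Type*} [MeasurableSpace X] (κ : Kernel ℝ X)

noncomputable def occupationMeasure (a b : ℝ) : Measure X := κ ∘ₘ volume.restrict (Ioc a b)

instance [IsFiniteKernel κ] (a b : ℝ) : IsFiniteMeasure (occupationMeasure κ a b) := by
  unfold occupationMeasure; infer_instance

theorem lintegral_occupationMeasure {g : X → ℝ≥0∞} (hg : Measurable g) (a b : ℝ) :
    ∫⁻ x, g x ∂occupationMeasure κ a b = ∫⁻ r in Ioc a b, ∫⁻ x, g x ∂κ r :=
  Measure.lintegral_bind κ.measurable.aemeasurable hg.aemeasurable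

theorem occupationMeasure_add {a b c : ℝ} (hab : a ≤ b) (hbc : b ≤ c) :
    occupationMeasure κ a b + occupationMeasure κ b c = occupationMeasure κ a c := by
  rw [occupationMeasure, occupationMeasure, occupationMeasure, ← Measure.comp_add,
    ← Measure.restrict_union (Ioc_disjoint_Ioc_of_le le_rfl) measurableSet_Ioc,
    Ioc_union_Ioc_eq_Ioc hab hbc]

theorem occupationMeasure_self (a : ℝ) : occupationMeasure κ a a = 0 := by
  simp [occupationMeasure]

theorem occupationMeasure_real_apply [IsFiniteKernel κ] {s : ℝ} (hs : 0 ≤ s) {A : Set X}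
    (hA : MeasurableSet A) :
    (occupationMeasure κ 0 s).real A = ∫ r in (0 : ℝ)..s, (κ r).real A := by
  rw [intervalIntegral.integral_of_le hs, measureReal_def, occupationMeasure,
    Measure.bind_apply hA κ.measurable.aemeasurable]
  simp only [measureReal_def]
  rw [integral_toReal (κ.measurable_coe hA).aemeasurable (ae_of_all _ fun r ↦ measure_lt_top _ _)]

end Occupation

section OccupationDensity

variable {X : Type*} [MeasurableSpace X]

def IsOccupationDensity (κ : Kernel ℝ X) (μ : Measure X) (n : ℝ → X → ℝ) (t : ℝ) : Prop :=
  ∀ s ∈ Icc 0 t, occupationMeasure κ 0 s = μ.withDensity fun x ↦ ENNReal.ofReal (n s x)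

variable {κ : Kernel ℝ X} {μ : Measure X} {n : ℝ → X → ℝ} {t : ℝ}

namespace IsOccupationDensity

theorem lintegral_lt_top [IsFiniteKernel κ] (h : IsOccupationDensity κ μ n t) {s : ℝ}
    (hs : s ∈ Icc 0 t) : ∫⁻ x, ENNReal.ofReal (n s x) ∂μ < ∞ := by
  rw [← setLIntegral_univ, ← withDensity_apply _ MeasurableSet.univ, ← h s hs]
  exact measure_lt_top _ _

theorem ae_eq_zero (h : IsOccupationDensity κ μ n t) (ht : 0 ≤ t) (hn : Measurable (n 0))
    (hn0 : ∀ x, 0 ≤ n 0 x) : ∀ᵐ x ∂μ, n 0 x = 0 := by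
  have h0 := h 0 (left_mem_Icc.2 ht)
  rw [occupationMeasure_self, eq_comm,
    withDensity_eq_zero_iff hn.ennreal_ofReal.aemeasurable] at h0
  filter_upwards [h0] with x hx
  exact le_antisymm (ENNReal.ofReal_eq_zero.1 hx) (hn0 x)

variable [TopologicalSpace X] [OpensMeasurableSpace X]

theorem monotoneOn [μ.IsOpenPosMeasure] [SigmaFinite μ] (h : IsOccupationDensity κ μ n t)
    (hn : Continuous (uncurry n)) (hn0 : ∀ s x, 0 ≤ n s x) (x : X) :
    MonotoneOn (fun s ↦ n s x) (Icc 0 t) := by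
  intro a ha b hb hab
  have hle : μ.withDensity (fun x ↦ ENNReal.ofReal (n a x)) ≤
      μ.withDensity fun x ↦ ENNReal.ofReal (n b x) := by
    rw [← h a ha, ← h b hb, ← occupationMeasure_add κ ha.1 hab]
    exact Measure.le_add_right le_rfl
  have hae : (fun x ↦ ENNReal.ofReal (n a x)) ≤ᵐ[μ] fun x ↦ ENNReal.ofReal (n b x) :=
    ae_le_of_forall_setLIntegral_le_of_sigmaFinite
      (hn.uncurry_left a).measurable.ennreal_ofReal fun A hA _ ↦ by
        simpa only [withDensity_apply _ hA] using hle A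
  refine Measure.le_of_ae_le (μ := μ) ?_ (hn.uncurry_left a) (hn.uncurry_left b) x
  filter_upwards [hae] with y hy
  exact (ENNReal.ofReal_le_ofReal_iff (hn0 b y)).1 hy

theorem occupationMeasure_eq [μ.IsOpenPosMeasure] [SigmaFinite μ] [IsFiniteKernel κ]
    (h : IsOccupationDensity κ μ n t) (hn : Continuous (uncurry n)) (hn0 : ∀ s x, 0 ≤ n s x)
    {a b : ℝ} (ha : 0 ≤ a) (hab : a ≤ b) (hbt : b ≤ t) :
    occupationMeasure κ a b = μ.withDensity fun x ↦ ENNReal.ofReal (n b x - n a x) := by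
  have hsum : occupationMeasure κ 0 a + occupationMeasure κ a b =
      occupationMeasure κ 0 a + μ.withDensity fun x ↦ ENNReal.ofReal (n b x - n a x) := by
    rw [occupationMeasure_add κ ha hab, h b ⟨ha.trans hab, hbt⟩, h a ⟨ha, hab.trans hbt⟩,
      ← withDensity_add_left (hn.uncurry_left a).measurable.ennreal_ofReal]
    congr with x
    have hmono := h.monotoneOn hn hn0 x ⟨ha, hab.trans hbt⟩ ⟨ha.trans hab, hbt⟩ hab
    rw [Pi.add_apply, ← ENNReal.ofReal_add (hn0 a x) (sub_nonneg.2 hmono), add_sub_cancel]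
  ext A hA
  exact (ENNReal.add_right_inj (measure_ne_top _ A)).1 (congrArg (· A) hsum)

end IsOccupationDensity

end OccupationDensity

section Sandwich

variable {X : Type*} [TopologicalSpace X] [MeasurableSpace X] [OpensMeasurableSpace X]
  {μ : Measure X} [μ.IsOpenPosMeasure] [SigmaFinite μ] {κ : Kernel ℝ X} [IsFiniteKernel κ]
  {n : ℝ → X → ℝ} {t : ℝ} {w : X → ℝ}

namespace IsOccupationDensity

theorem setLIntegral_Ioc_lintegral_eq (h : IsOccupationDensity κ μ n t)
    (hn : Continuous (uncurry n)) (hn0 : ∀ s x, 0 ≤ n s x) {a b : ℝ} (ha : 0 ≤ a) (hab : a ≤ b)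
    (hbt : b ≤ t) {g : X → ℝ≥0∞} (hg : Measurable g) :
    ∫⁻ s in Ioc a b, ∫⁻ x, g x ∂κ s = ∫⁻ x, ENNReal.ofReal (n b x - n a x) * g x ∂μ := by
  rw [← lintegral_occupationMeasure κ hg, h.occupationMeasure_eq hn hn0 ha hab hbt,
    lintegral_withDensity_eq_lintegral_mul _ (by fun_prop) hg]
  rfl

theorem sum_setLIntegral_gridPoint_eq (h : IsOccupationDensity κ μ n t)
    (hn : Continuous (uncurry n)) (hn0 : ∀ s x, 0 ≤ n s x) (ht : 0 ≤ t) (hw : Measurable w)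
    (hw0 : ∀ x, 0 ≤ w x) (N : ℕ) (r : ℕ → ℝ) :
    ∑ i ∈ Finset.range N, ∫⁻ s in Ioc (gridPoint t N i) (gridPoint t N (i + 1)),
        ∫⁻ x, ENNReal.ofReal (w x * exp (-2 * n (r i) x)) ∂κ s =
      ∫⁻ x, ENNReal.ofReal (w x * ∑ i ∈ Finset.range N,
        (n (gridPoint t N (i + 1)) x - n (gridPoint t N i) x) * exp (-2 * n (r i) x)) ∂μ := by
  have hΔ : ∀ i < N, ∀ x, 0 ≤ n (gridPoint t N (i + 1)) x - n (gridPoint t N i) x :=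
    fun i hi x ↦ sub_nonneg.2 ((h.monotoneOn hn hn0 x).gridPoint_le ht hi)
  calc _ = ∑ i ∈ Finset.range N, ∫⁻ x, ENNReal.ofReal (w x *
        ((n (gridPoint t N (i + 1)) x - n (gridPoint t N i) x) * exp (-2 * n (r i) x))) ∂μ := by
        refine Finset.sum_congr rfl fun i hi ↦ ?_
        have hi := Finset.mem_range.1 hi
        rw [h.setLIntegral_Ioc_lintegral_eq hn hn0 (gridPoint_mem_Icc ht hi.le).1
          (gridPoint_mono ht i.le_succ) (gridPoint_mem_Icc ht hi).2 (by fun_prop)]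
        refine lintegral_congr fun x ↦ ?_
        rw [← ENNReal.ofReal_mul (hΔ i hi x)]
        ring_nf
    _ = _ := by
        rw [← lintegral_finsetSum _ fun i _ ↦ by fun_prop]
        refine lintegral_congr fun x ↦ ?_
        rw [← ENNReal.ofReal_sum_of_nonneg fun i hi ↦ by
          have := hΔ i (Finset.mem_range.1 hi) x; have := hw0 x; positivity, Finset.mul_sum]

theorem setLIntegral_le_lintegral_leftExpSum (h : IsOccupationDensity κ μ n t)
    (hn : Continuous (uncurry n)) (hn0 : ∀ s x, 0 ≤ n s x) (ht : 0 ≤ t) (hw : Measurable w)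
    (hw0 : ∀ x, 0 ≤ w x) {N : ℕ} (hN : N ≠ 0) :
    ∫⁻ s in Ioc 0 t, ∫⁻ x, ENNReal.ofReal (w x * exp (-2 * n s x)) ∂κ s ≤
      ∫⁻ x, ENNReal.ofReal (w x * leftExpSum (fun s ↦ n s x) t N) ∂μ := by
  have hsplit := setLIntegral_Ioc_eq_sum (μ := volume) (gridPoint_mono (N := N) ht)
    (fun s ↦ ∫⁻ x, ENNReal.ofReal (w x * exp (-2 * n s x)) ∂κ s) N
  rw [gridPoint_zero, gridPoint_self hN] at hsplit
  simp only [hsplit, leftExpSum, ← h.sum_setLIntegral_gridPoint_eq hn hn0 ht hw hw0 N]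
  refine Finset.sum_le_sum fun i hi ↦ setLIntegral_mono' measurableSet_Ioc fun s hs ↦
    lintegral_mono fun x ↦ ENNReal.ofReal_le_ofReal
      (mul_le_mul_of_nonneg_left (exp_le_exp.2 ?_) (hw0 x))
  have hi := Finset.mem_range.1 hi
  have := h.monotoneOn hn hn0 x (gridPoint_mem_Icc ht hi.le)
    ⟨(gridPoint_mem_Icc ht hi.le).1.trans hs.1.le, hs.2.trans (gridPoint_mem_Icc ht hi).2⟩ hs.1.le
  linarith

theorem lintegral_rightExpSum_le_setLIntegral (h : IsOccupationDensity κ μ n t)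
    (hn : Continuous (uncurry n)) (hn0 : ∀ s x, 0 ≤ n s x) (ht : 0 ≤ t) (hw : Measurable w)
    (hw0 : ∀ x, 0 ≤ w x) {N : ℕ} (hN : N ≠ 0) :
    ∫⁻ x, ENNReal.ofReal (w x * rightExpSum (fun s ↦ n s x) t N) ∂μ ≤
      ∫⁻ s in Ioc 0 t, ∫⁻ x, ENNReal.ofReal (w x * exp (-2 * n s x)) ∂κ s := by
  have hsplit := setLIntegral_Ioc_eq_sum (μ := volume) (gridPoint_mono (N := N) ht)
    (fun s ↦ ∫⁻ x, ENNReal.ofReal (w x * exp (-2 * n s x)) ∂κ s) N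
  rw [gridPoint_zero, gridPoint_self hN] at hsplit
  simp only [hsplit, rightExpSum,
    ← h.sum_setLIntegral_gridPoint_eq hn hn0 ht hw hw0 N (fun i ↦ gridPoint t N (i + 1))]
  refine Finset.sum_le_sum fun i hi ↦ setLIntegral_mono' measurableSet_Ioc fun s hs ↦
    lintegral_mono fun x ↦ ENNReal.ofReal_le_ofReal
      (mul_le_mul_of_nonneg_left (exp_le_exp.2 ?_) (hw0 x))
  have hi := Finset.mem_range.1 hi
  have := h.monotoneOn hn hn0 x
    ⟨(gridPoint_mem_Icc ht hi.le).1.trans hs.1.le, hs.2.trans (gridPoint_mem_Icc ht hi).2⟩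
    (gridPoint_mem_Icc ht hi) hs.2
  linarith

theorem tendsto_lintegral_leftExpSum (h : IsOccupationDensity κ μ n t)
    (hn : Continuous (uncurry n)) (hn0 : ∀ s x, 0 ≤ n s x) (ht : 0 ≤ t) (hw : Measurable w)
    (hw1 : ∀ x, w x ≤ 1) :
    Tendsto (fun N ↦ ∫⁻ x, ENNReal.ofReal (w x * leftExpSum (fun s ↦ n s x) t N) ∂μ) atTop
      (𝓝 (∫⁻ x, ENNReal.ofReal (w x * ((1 - exp (-2 * n t x)) / 2)) ∂μ)) := by
  refine tendsto_lintegral_ofReal_of_le (B := fun x ↦ n t x)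
    (fun N ↦ by unfold leftExpSum; fun_prop) (fun N x ↦ ?_) (h.lintegral_lt_top ⟨ht, le_rfl⟩).ne ?_
  · rw [leftExpSum, Finset.mul_sum]
    simp_rw [mul_left_comm (w x)]
    exact sum_gridPoint_increment_mul_le (h.monotoneOn hn hn0 x) (hn0 0 x) ht fun i ↦
      mul_le_one₀ (hw1 x) (exp_pos _).le
        (exp_le_one_iff.2 (by linarith [hn0 (gridPoint t N i) x]))
  · filter_upwards [h.ae_eq_zero ht (hn.uncurry_left 0).measurable (hn0 0)] with x hx
    have := (tendsto_leftExpSum (h.monotoneOn hn hn0 x) (hn.uncurry_right x).continuousOn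
      ht).const_mul (w x)
    rwa [hx, mul_zero, exp_zero] at this

theorem tendsto_lintegral_rightExpSum (h : IsOccupationDensity κ μ n t)
    (hn : Continuous (uncurry n)) (hn0 : ∀ s x, 0 ≤ n s x) (ht : 0 ≤ t) (hw : Measurable w)
    (hw1 : ∀ x, w x ≤ 1) :
    Tendsto (fun N ↦ ∫⁻ x, ENNReal.ofReal (w x * rightExpSum (fun s ↦ n s x) t N) ∂μ) atTop
      (𝓝 (∫⁻ x, ENNReal.ofReal (w x * ((1 - exp (-2 * n t x)) / 2)) ∂μ)) := by
  refine tendsto_lintegral_ofReal_of_le (B := fun x ↦ n t x)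
    (fun N ↦ by unfold rightExpSum; fun_prop) (fun N x ↦ ?_) (h.lintegral_lt_top ⟨ht, le_rfl⟩).ne ?_
  · rw [rightExpSum, Finset.mul_sum]
    simp_rw [mul_left_comm (w x)]
    exact sum_gridPoint_increment_mul_le (h.monotoneOn hn hn0 x) (hn0 0 x) ht fun i ↦
      mul_le_one₀ (hw1 x) (exp_pos _).le
        (exp_le_one_iff.2 (by linarith [hn0 (gridPoint t N (i + 1)) x]))
  · filter_upwards [h.ae_eq_zero ht (hn.uncurry_left 0).measurable (hn0 0)] with x hx
    have := (tendsto_rightExpSum (h.monotoneOn hn hn0 x) (hn.uncurry_right x).continuousOn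
      ht).const_mul (w x)
    rwa [hx, mul_zero, exp_zero] at this

theorem setLIntegral_lintegral_exp_eq (h : IsOccupationDensity κ μ n t)
    (hn : Continuous (uncurry n)) (hn0 : ∀ s x, 0 ≤ n s x) (ht : 0 ≤ t) (hw : Measurable w)
    (hw0 : ∀ x, 0 ≤ w x) (hw1 : ∀ x, w x ≤ 1) :
    ∫⁻ s in Ioc 0 t, ∫⁻ x, ENNReal.ofReal (w x * exp (-2 * n s x)) ∂κ s =
      ∫⁻ x, ENNReal.ofReal (w x * ((1 - exp (-2 * n t x)) / 2)) ∂μ :=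
  le_antisymm
    (ge_of_tendsto (h.tendsto_lintegral_leftExpSum hn hn0 ht hw hw1) <|
      (eventually_ne_atTop 0).mono fun _ hN ↦
        h.setLIntegral_le_lintegral_leftExpSum hn hn0 ht hw hw0 hN)
    (le_of_tendsto (h.tendsto_lintegral_rightExpSum hn hn0 ht hw hw1) <|
      (eventually_ne_atTop 0).mono fun _ hN ↦
        h.lintegral_rightExpSum_le_setLIntegral hn hn0 ht hw hw0 hN)

end IsOccupationDensity

end Sandwich

theorem ContinuousOn.continuous_uncurry_projIcc {X : Type*} [TopologicalSpace X]
    {n : ℝ → X → ℝ} {t : ℝ} (ht : 0 ≤ t)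
    (hn : ContinuousOn (uncurry n) (Icc 0 t ×ˢ univ)) :
    Continuous (uncurry fun s ↦ n (projIcc 0 t ht s)) :=
  hn.comp_continuous (f := fun p : ℝ × X ↦ ((projIcc 0 t ht p.1 : ℝ), p.2)) (by fun_prop)
    fun p ↦ ⟨(projIcc 0 t ht p.1).2, trivial⟩

section Clamped

variable {X : Type*} [TopologicalSpace X] [MeasurableSpace X] [BorelSpace X]
  [HasOuterApproxClosed X] [T2Space X] [SigmaCompactSpace X] {μ : Measure X}
  {ν : ℝ → FiniteMeasure X} {n : ℝ → X → ℝ} {t : ℝ}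

theorem isOccupationDensity_IccExtend [IsLocallyFiniteMeasure μ] (ht : 0 ≤ t)
    (hν : ContinuousOn ν (Icc 0 t)) (hn : ContinuousOn (uncurry n) (Icc 0 t ×ˢ univ))
    (hn0 : ∀ s x, 0 ≤ n s x)
    (hdens : ∀ s ∈ Icc 0 t, ∀ A, MeasurableSet A →
      ∫ r in (0 : ℝ)..s, ((ν r : Measure X) A).toReal = ∫ x in A, n s x ∂μ) :
    IsOccupationDensity (Kernel.IccExtend ht ν hν) μ (fun s ↦ n (projIcc 0 t ht s)) t :=
  fun s hs ↦ Measure.eq_withDensity_ofReal_of_measureReal_eq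
    ((hn.continuous_uncurry_projIcc ht).uncurry_left s).locallyIntegrable
    (ae_of_all _ fun _ ↦ hn0 _ _) fun A hA ↦ by
      rw [occupationMeasure_real_apply _ hs.1 hA]
      simp only [projIcc_of_mem ht hs, ← hdens s hs A hA]
      refine intervalIntegral.integral_congr fun r hr ↦ ?_
      rw [uIcc_of_le hs.1] at hr
      simp [Kernel.IccExtend_apply_of_mem ⟨hr.1, hr.2.trans hs.2⟩, measureReal_def]

theorem intervalIntegral_integral_mul_exp_eq [IsLocallyFiniteMeasure μ] [μ.IsOpenPosMeasure]
    [SigmaFinite μ] (ht : 0 ≤ t) (hν : ContinuousOn ν (Icc 0 t))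
    (hn : ContinuousOn (uncurry n) (Icc 0 t ×ˢ univ)) (hn0 : ∀ s x, 0 ≤ n s x)
    (hdens : ∀ s ∈ Icc 0 t, ∀ A, MeasurableSet A →
      ∫ r in (0 : ℝ)..s, ((ν r : Measure X) A).toReal = ∫ x in A, n s x ∂μ)
    {w : X → ℝ} (hw : Measurable w) (hw0 : ∀ x, 0 ≤ w x) (hw1 : ∀ x, w x ≤ 1) :
    ∫ s in (0 : ℝ)..t, ∫ x, w x * exp (-2 * n s x) ∂(ν s : Measure X) =
      ∫ x, w x * ((1 - exp (-2 * n t x)) / 2) ∂μ := by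
  have hn' := hn.continuous_uncurry_projIcc ht
  have hn'm : Measurable fun p : ℝ × X ↦ n (projIcc 0 t ht p.1) p.2 := hn'.measurable
  have hnt : Continuous (n t) := by simpa [projIcc_right] using hn'.uncurry_left t
  have hexp : ∀ s x, exp (-2 * n s x) ≤ 1 := fun s x ↦
    exp_le_one_iff.2 (by linarith [hn0 s x])
  have key := (isOccupationDensity_IccExtend ht hν hn hn0 hdens).setLIntegral_lintegral_exp_eq
    hn' (fun _ _ ↦ hn0 _ _) ht hw hw0 hw1
  simp only [projIcc_right] at key
  rw [intervalIntegral.integral_of_le ht, integral_eq_lintegral_of_nonneg_ae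
    (ae_of_all _ fun x ↦ mul_nonneg (hw0 x) (by linarith [hexp t x]))
    (hw.aestronglyMeasurable.mul (by fun_prop)), ← key, ← integral_integral_eq_toReal_lintegral
    ((hw.comp measurable_snd).mul (measurable_exp.comp (measurable_const.mul hn'm)))
    (fun s x ↦ mul_nonneg (hw0 x) (exp_pos _).le)
    fun s x ↦ mul_le_one₀ (hw1 x) (exp_pos _).le (hexp _ x)]
  refine setIntegral_congr_fun measurableSet_Ioc fun s hs ↦ ?_
  simp [Kernel.IccExtend_apply_of_mem (Ioc_subset_Icc_self hs),
    projIcc_of_mem ht (Ioc_subset_Icc_self hs)]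

end Clamped

theorem occupation_density_quadratic_identity_general (d : ℕ) (t : ℝ) (ht : 0 < t)
    (ν : ℝ → FiniteMeasure (EuclideanSpace ℝ (Fin d)))
    (hν : ContinuousOn ν (Set.Icc 0 t))
    (n : ℝ → EuclideanSpace ℝ (Fin d) → ℝ)
    (hn_nonneg : ∀ s x, 0 ≤ n s x)
    (hn_cont : ContinuousOn (fun p : ℝ × EuclideanSpace ℝ (Fin d) => n p.1 p.2)
      (Set.Icc 0 t ×ˢ Set.univ))
    (hdens : ∀ s ∈ Set.Icc (0:ℝ) t, ∀ A : Set (EuclideanSpace ℝ (Fin d)), MeasurableSet A →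
      (∫ r in (0:ℝ)..s, ((ν r : Measure (EuclideanSpace ℝ (Fin d))) A).toReal)
        = ∫ x in A, n s x)
    (f : EuclideanSpace ℝ (Fin d) → ℝ)
    (hf_meas : Measurable f) (hf0 : ∀ x, 0 ≤ f x) (hf1 : ∀ x, f x ≤ 1) :
    (∫ s in (0:ℝ)..t,
        ∫ x, (f x)^2 * Real.exp (-2 * n s x) ∂(ν s : Measure (EuclideanSpace ℝ (Fin d))))
      = (1/2) * ∫ x, (f x)^2 * (1 - Real.exp (-2 * n t x)) ∧
    (Bornology.IsBounded (Function.support f) →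
      (∫ s in (0:ℝ)..t,
          ∫ x, (f x)^2 * Real.exp (-2 * n s x) ∂(ν s : Measure (EuclideanSpace ℝ (Fin d))))
        ≤ (1/2) * (volume (Function.support f)).toReal) := by
  have hf2 : ∀ x, f x ^ 2 ≤ 1 := fun x ↦ pow_le_one₀ (hf0 x) (hf1 x)
  have heq : ∫ s in (0 : ℝ)..t, ∫ x, f x ^ 2 * exp (-2 * n s x) ∂(ν s : Measure _) =
      1 / 2 * ∫ x, f x ^ 2 * (1 - exp (-2 * n t x)) := by
    rw [intervalIntegral_integral_mul_exp_eq ht.le hν hn_cont hn_nonneg hdens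
      (hf_meas.pow_const 2) (fun _ ↦ sq_nonneg _) hf2, ← integral_const_mul]
    congr with x; ring
  refine ⟨heq, fun hsupp ↦ heq ▸ mul_le_mul_of_nonneg_left ?_ (by norm_num)⟩
  have hnt : Continuous (n t) := hn_cont.comp_continuous (continuous_const.prodMk continuous_id)
    fun _ ↦ ⟨right_mem_Icc.2 ht.le, trivial⟩
  have hexp : ∀ x, exp (-2 * n t x) ≤ 1 := fun x ↦
    exp_le_one_iff.2 (by linarith [hn_nonneg t x])
  exact integral_le_measureReal_of_support_subset (by fun_prop)
    (fun x ↦ mul_nonneg (sq_nonneg _) (sub_nonneg.2 (hexp x)))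
    (fun x ↦ mul_le_one₀ (hf2 x) (sub_nonneg.2 (hexp x)) (sub_le_self _ (exp_pos _).le))
    (fun x hx h0 ↦ hx (by simp [h0])) hsupp.measure_lt_top.ne

theorem occupation_density_quadratic_identity (d : ℕ) (t : ℝ) (ht : 0 < t)
    (ν : ℝ → FiniteMeasure (EuclideanSpace ℝ (Fin d)))
    (hν : ContinuousOn ν (Set.Icc 0 t))
    (n : ℝ → EuclideanSpace ℝ (Fin d) → ℝ)
    (hn_nonneg : ∀ s x, 0 ≤ n s x)
    (hn_bdd : ∃ K : ℝ, ∀ s x, n s x ≤ K)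
    (hn_cont : ContinuousOn (fun p : ℝ × EuclideanSpace ℝ (Fin d) => n p.1 p.2)
      (Set.Icc 0 t ×ˢ Set.univ))
    (hdens : ∀ s ∈ Set.Icc (0:ℝ) t, ∀ A : Set (EuclideanSpace ℝ (Fin d)), MeasurableSet A →
      (∫ r in (0:ℝ)..s, ((ν r : Measure (EuclideanSpace ℝ (Fin d))) A).toReal)
        = ∫ x in A, n s x)
    (f : EuclideanSpace ℝ (Fin d) → ℝ)
    (hf_meas : Measurable f) (hf0 : ∀ x, 0 ≤ f x) (hf1 : ∀ x, f x ≤ 1) :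
    (∫ s in (0:ℝ)..t,
        ∫ x, (f x)^2 * Real.exp (-2 * n s x) ∂(ν s : Measure (EuclideanSpace ℝ (Fin d))))
      = (1/2) * ∫ x, (f x)^2 * (1 - Real.exp (-2 * n t x)) ∧
    (Bornology.IsBounded (Function.support f) →
      (∫ s in (0:ℝ)..t,
          ∫ x, (f x)^2 * Real.exp (-2 * n s x) ∂(ν s : Measure (EuclideanSpace ℝ (Fin d))))
        ≤ (1/2) * (volume (Function.support f)).toReal) :=
  occupation_density_quadratic_identity_general d t ht ν hν n hn_nonneg hn_cont hdens f hf_meas hf0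
    hf1
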